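/- arXiv:2605.20218 — 6 statements merged into one kernel-verified Lean document; each statement's English description precedes it below -/
import Mathlib

section
/- The function F is non-negative, monotonically non-increasing, and submodular on subsets of P. That is: F(S) ≥ 0 for all S ⊆ P; A ⊆ B ⊆ P implies F(A) ≥ F(B); and for all A ⊆ B ⊆ P and x ∈ P \ B, F(A ∪ {x}) − F(A) ≥ F(B ∪ {x}) − F(B). -/
open Finset

/-- A single transmission step along a live edge of `H`, avoiding the removed vertex set `S`. -/
def MintStep {α : Type*} (H : Finset (α × α)) (S : Finset α) (x y : α) : Prop :=
  (x, y) ∈ H ∧ x ∉ S ∧ y ∉ S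

/-- `u` is reachable from `v` in `H[V \ S]`: there is a directed path (possibly of length 0)
from `v` to `u` using only edges of `H`, all of whose vertices avoid `S`. -/
def MintReach {α : Type*} (H : Finset (α × α)) (S : Finset α) (v u : α) : Prop :=
  v ∉ S ∧ Relation.ReflTransGen (MintStep H S) v u

/-- The realized MINT objective `f_H(S)`: the number of negative nodes (nodes outside `P`)
reachable from some untreated positive node (a node of `P \ S`) in `H[V \ S]`. -/
noncomputable def mintf {α : Type*} [DecidableEq α] (P : Finset α) (H : Finset (α × α))
    (S : Finset α) : ℕ :=
  Set.ncard {u : α | u ∉ P ∧ ∃ v ∈ P \ S, MintReach H S v u}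

/-- The probability of the live-edge realization `H ⊆ E`. -/
def mintPr {α : Type*} [DecidableEq α] (E : Finset (α × α)) (w : α × α → ℝ)
    (H : Finset (α × α)) : ℝ :=
  (∏ e ∈ H, w e) * ∏ e ∈ E \ H, (1 - w e)

/-- The expected MINT objective `F(S) = Σ_{H ⊆ E} Pr(H) · f_H(S)`. -/
noncomputable def mintF {α : Type*} [DecidableEq α] (E : Finset (α × α)) (w : α × α → ℝ)
    (P : Finset α) (S : Finset α) : ℝ :=
  ∑ H ∈ E.powerset, mintPr E w H * (mintf P H S : ℝ)

/-!
Since positive nodes have no incoming edges, a live path starting at an untreated positive node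
never returns to `P`, so it avoids the treated set `S ⊆ P` automatically. Hence `f_H(S)` is the
size of the union, over `v ∈ P \ S`, of the sets of negative nodes reachable from `v` in `H`:
a coverage function of `P \ S`. Coverage functions are monotone and submodular, and `S ↦ P \ S`
reverses inclusions, so each `f_H` is non-increasing and submodular on subsets of `P`; `F` is a
non-negative combination of the `f_H`.
-/

namespace Set

theorem ncard_union_add_ncard_le_of_subset {α : Type*} {u t t' : Set α} (htt' : t ⊆ t')
    (hu : u.Finite) (ht' : t'.Finite) :
    (u ∪ t').ncard + t.ncard ≤ (u ∪ t).ncard + t'.ncard := by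
  have hut : (u ∪ t).Finite := hu.union (ht'.subset htt')
  have hunion : (u ∪ t) ∪ t' = u ∪ t' := by
    rw [union_assoc, union_eq_right.2 htt']
  calc (u ∪ t').ncard + t.ncard
      ≤ (u ∪ t').ncard + ((u ∪ t) ∩ t').ncard :=
        Nat.add_le_add_left (ncard_le_ncard (subset_inter subset_union_right htt')
          (hut.inter_of_left _)) _
    _ = (u ∪ t).ncard + t'.ncard := by
        rw [← hunion, ncard_union_add_ncard_inter _ _ hut ht']

end Set

theorem Finset.sdiff_eq_insert_sdiff_union_singleton {α : Type*} [DecidableEq α] {P A : Finset α}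
    {x : α} (hxP : x ∈ P) (hxA : x ∉ A) : P \ A = insert x (P \ (A ∪ {x})) := by
  ext u
  by_cases h : u = x <;> simp [h, hxP, hxA]

section Coverage

variable {ι β : Type*} {C : ι → Set β}

theorem ncard_biUnion_le_of_subset {T T' : Finset ι} (hC : ∀ i ∈ T', (C i).Finite)
    (h : T ⊆ T') : (⋃ i ∈ T, C i).ncard ≤ (⋃ i ∈ T', C i).ncard :=
  Set.ncard_le_ncard (Set.biUnion_subset_biUnion_left (Finset.coe_subset.2 h))
    (T'.finite_toSet.biUnion hC)

theorem ncard_biUnion_insert_add_le [DecidableEq ι] {T T' : Finset ι} {x : ι}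
    (hC : ∀ i, (C i).Finite) (h : T ⊆ T') :
    (⋃ i ∈ insert x T', C i).ncard + (⋃ i ∈ T, C i).ncard
      ≤ (⋃ i ∈ insert x T, C i).ncard + (⋃ i ∈ T', C i).ncard := by
  simp only [Finset.set_biUnion_insert]
  exact Set.ncard_union_add_ncard_le_of_subset
    (Set.biUnion_subset_biUnion_left (Finset.coe_subset.2 h)) (hC x)
    (T'.finite_toSet.biUnion fun i _ => hC i)

end Coverage

section Realization

variable {α : Type*} {P S : Finset α} {H : Finset (α × α)}

def negReach (P : Finset α) (H : Finset (α × α)) (v : α) : Set α :=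
  {u | u ∉ P ∧ Relation.ReflTransGen (fun a b => (a, b) ∈ H) v u}

theorem negReach_finite (v : α) : (negReach P H v).Finite := by
  refine ((H.finite_toSet.image Prod.snd).insert v).subset ?_
  rintro u ⟨-, hu⟩
  rcases hu.cases_tail with rfl | ⟨c, -, hcu⟩
  · exact Set.mem_insert _ _
  · exact Set.mem_insert_of_mem _ ⟨(c, u), hcu, rfl⟩

theorem mintReach_iff (hH : ∀ e ∈ H, e.2 ∉ P) (hSP : S ⊆ P) {v u : α} (hv : v ∉ S) :
    MintReach H S v u ↔ Relation.ReflTransGen (fun a b => (a, b) ∈ H) v u := by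
  refine ⟨fun h => Relation.ReflTransGen.mono (fun _ _ hab => hab.1) _ _ h.2, fun h => ⟨hv, ?_⟩⟩
  induction h with
  | refl => exact .refl
  | @tail b c _ hbc ih =>
    have hb : b ∉ S := by
      rcases ih.cases_tail with rfl | ⟨_, -, hab⟩
      · exact hv
      · exact hab.2.2
    exact ih.tail ⟨hbc, hb, fun hc => hH _ hbc (hSP hc)⟩

variable [DecidableEq α]

theorem mintf_eq_ncard_biUnion (hH : ∀ e ∈ H, e.2 ∉ P) (hSP : S ⊆ P) :
    mintf P H S = (⋃ v ∈ P \ S, negReach P H v).ncard := by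
  unfold mintf negReach
  congr 1
  ext u
  simp only [Set.mem_ofPred_eq, Set.mem_iUnion, exists_prop]
  constructor
  · rintro ⟨hu, v, hv, hr⟩
    exact ⟨v, hv, hu, (mintReach_iff hH hSP (Finset.mem_sdiff.1 hv).2).1 hr⟩
  · rintro ⟨v, hv, hu, hr⟩
    exact ⟨hu, v, hv, (mintReach_iff hH hSP (Finset.mem_sdiff.1 hv).2).2 hr⟩

theorem mintf_antitone (hH : ∀ e ∈ H, e.2 ∉ P) {A B : Finset α} (hAB : A ⊆ B) (hBP : B ⊆ P) :
    mintf P H B ≤ mintf P H A := by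
  rw [mintf_eq_ncard_biUnion hH hBP, mintf_eq_ncard_biUnion hH (hAB.trans hBP)]
  exact ncard_biUnion_le_of_subset (fun v _ => negReach_finite v) (Finset.sdiff_subset_sdiff
    subset_rfl hAB)

theorem mintf_submodular (hH : ∀ e ∈ H, e.2 ∉ P) {A B : Finset α} {x : α} (hAB : A ⊆ B)
    (hBP : B ⊆ P) (hxP : x ∈ P) (hxB : x ∉ B) :
    mintf P H A + mintf P H (B ∪ {x}) ≤ mintf P H (A ∪ {x}) + mintf P H B := by
  have hx : ({x} : Finset α) ⊆ P := Finset.singleton_subset_iff.2 hxP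
  rw [mintf_eq_ncard_biUnion hH (hAB.trans hBP), mintf_eq_ncard_biUnion hH hBP,
    mintf_eq_ncard_biUnion hH (Finset.union_subset (hAB.trans hBP) hx),
    mintf_eq_ncard_biUnion hH (Finset.union_subset hBP hx),
    Finset.sdiff_eq_insert_sdiff_union_singleton hxP (fun h => hxB (hAB h)),
    Finset.sdiff_eq_insert_sdiff_union_singleton hxP hxB]
  exact (ncard_biUnion_insert_add_le negReach_finite
    (Finset.sdiff_subset_sdiff subset_rfl (Finset.union_subset_union hAB subset_rfl))).trans_eq
    (add_comm _ _)

end Realization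

section Expectation

variable {α : Type*} [DecidableEq α] {E : Finset (α × α)} {w : α × α → ℝ}

theorem mintPr_nonneg (hw : ∀ e ∈ E, 0 ≤ w e ∧ w e ≤ 1) {H : Finset (α × α)} (hHE : H ⊆ E) :
    0 ≤ mintPr E w H :=
  mul_nonneg (Finset.prod_nonneg fun e he => (hw e (hHE he)).1)
    (Finset.prod_nonneg fun e he => sub_nonneg.2 (hw e (Finset.mem_sdiff.1 he).1).2)

theorem mintF_add (P S T : Finset α) :
    mintF E w P S + mintF E w P T
      = ∑ H ∈ E.powerset, mintPr E w H * ((mintf P H S + mintf P H T : ℕ) : ℝ) := by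
  simp only [mintF, ← Finset.sum_add_distrib, Nat.cast_add, mul_add]

end Expectation

theorem stmt0_general {α : Type*} [DecidableEq α]
    (E : Finset (α × α)) (w : α × α → ℝ)
    (hw : ∀ e ∈ E, 0 ≤ w e ∧ w e ≤ 1)
    (P : Finset α) (hinc : ∀ e ∈ E, e.2 ∉ P) :
    (∀ S ⊆ P, 0 ≤ mintF E w P S) ∧
    (∀ A B : Finset α, A ⊆ B → B ⊆ P → mintF E w P B ≤ mintF E w P A) ∧
    (∀ A B : Finset α, ∀ x : α, A ⊆ B → B ⊆ P → x ∈ P → x ∉ B →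
      mintF E w P (B ∪ {x}) - mintF E w P B ≤ mintF E w P (A ∪ {x}) - mintF E w P A) := by
  have hPr : ∀ H ∈ E.powerset, 0 ≤ mintPr E w H := fun H hH =>
    mintPr_nonneg hw (Finset.mem_powerset.1 hH)
  have hH : ∀ H ∈ E.powerset, ∀ e ∈ H, e.2 ∉ P := fun H hH e he =>
    hinc e (Finset.mem_powerset.1 hH he)
  refine ⟨fun S _ => Finset.sum_nonneg fun H hH => mul_nonneg (hPr H hH) (Nat.cast_nonneg _),
    fun A B hAB hBP => Finset.sum_le_sum fun H h => ?_,
    fun A B x hAB hBP hxP hxB => ?_⟩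
  · exact mul_le_mul_of_nonneg_left (Nat.cast_le.2 (mintf_antitone (hH H h) hAB hBP)) (hPr H h)
  · have key : mintF E w P A + mintF E w P (B ∪ {x}) ≤ mintF E w P (A ∪ {x}) + mintF E w P B := by
      rw [mintF_add, mintF_add]
      exact Finset.sum_le_sum fun H h => mul_le_mul_of_nonneg_left
        (Nat.cast_le.2 (mintf_submodular (hH H h) hAB hBP hxP hxB)) (hPr H h)
    linarith

/-- `F` is non-negative, monotonically non-increasing, and submodular on subsets of `P`. -/
theorem stmt0 {α : Type*} [Fintype α] [DecidableEq α]
    (E : Finset (α × α)) (w : α × α → ℝ)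
    (hw : ∀ e ∈ E, 0 ≤ w e ∧ w e ≤ 1)
    (P : Finset α) (hinc : ∀ e ∈ E, e.2 ∉ P) :
    (∀ S ⊆ P, 0 ≤ mintF E w P S) ∧
    (∀ A B : Finset α, A ⊆ B → B ⊆ P → mintF E w P B ≤ mintF E w P A) ∧
    (∀ A B : Finset α, ∀ x : α, A ⊆ B → B ⊆ P → x ∈ P → x ∉ B →
      mintF E w P (B ∪ {x}) - mintF E w P B ≤ mintF E w P (A ∪ {x}) - mintF E w P A) :=
  stmt0_general E w hw P hinc
end

section
/- For every fixed realization H ⊆ E and every fixed node u ∈ N, the indicator function g_{H,u}(S) = 1 if u is reachable from some node of P \ S in H[V \ S] and g_{H,u}(S) = 0 otherwise, is submodular on subsets of P: for all A ⊆ B ⊆ P and x ∈ P \ B, g_{H,u}(A ∪ {x}) − g_{H,u}(A) ≥ g_{H,u}(B ∪ {x}) − g_{H,u}(B). -/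
/-!
Since no edge enters `P`, a path leaving a source `v ∈ P` never meets another positive node, so
removing positive nodes other than `v` cannot cut it. Hence if removing `x` on top of `A`
destroys reachability of `u`, then `x` itself was the source, and `x` still reaches `u` once all of
`B ⊇ A` is removed. Together with antitonicity of `g_{H,u}`, this gives submodularity by a case
analysis on the four `0/1` values.
-/

open Finset

open Classical in
/-- The indicator `g_{H,u}(S)`: `1` if `u` is reachable from some node of `P \ S`
in `H[V \ S]`, and `0` otherwise. -/
noncomputable def mintg {α : Type*} [DecidableEq α] (P : Finset α) (H : Finset (α × α))
    (u : α) (S : Finset α) : ℤ :=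
  if ∃ v ∈ P \ S, MintReach H S v u then 1 else 0

section

variable {α : Type*} {H : Finset (α × α)} {P S S' T A B : Finset α} {u v x : α}

theorem MintStep.anti (hS : S ⊆ S') : MintStep H S' ≤ MintStep H S :=
  fun _ _ h => ⟨h.1, fun ha => h.2.1 (hS ha), fun hb => h.2.2 (hS hb)⟩

theorem MintReach.anti (hS : S ⊆ S') (h : MintReach H S' v u) : MintReach H S v u :=
  ⟨fun hv => h.1 (hS hv), Relation.ReflTransGen.mono (MintStep.anti hS) _ _ h.2⟩

theorem MintReach.union [DecidableEq α] (hinc : ∀ e ∈ H, e.2 ∉ P) (hT : T ⊆ P)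
    (h : MintReach H S v u) (hvT : v ∉ T) : MintReach H (S ∪ T) v u := by
  obtain ⟨hvS, hp⟩ := h
  induction hp using Relation.ReflTransGen.head_induction_on with
  | refl => exact ⟨by simp [hvS, hvT], .refl⟩
  | @head a c step _ ih =>
    have hcT : c ∉ T := fun hc => hinc (a, c) step.1 (hT hc)
    exact ⟨by simp [hvS, hvT],
      .head ⟨step.1, by simp [hvS, hvT], by simp [step.2.2, hcT]⟩ (ih hcT step.2.2).2⟩

theorem mintg_le_one [DecidableEq α] : mintg P H u S ≤ 1 := by
  unfold mintg; split_ifs <;> norm_num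

theorem mintg_anti [DecidableEq α] (hS : S ⊆ S') : mintg P H u S' ≤ mintg P H u S := by
  unfold mintg
  split_ifs with h' h <;> try norm_num
  obtain ⟨v, hv, hr⟩ := h'
  exact h ⟨v, sdiff_subset_sdiff subset_rfl hS hv, hr.anti hS⟩

theorem exists_mintReach_union_singleton_or [DecidableEq α] (hinc : ∀ e ∈ H, e.2 ∉ P)
    (hAB : A ⊆ B) (hBP : B ⊆ P) (hxP : x ∈ P) (hxB : x ∉ B)
    (h : ∃ v ∈ P \ A, MintReach H A v u) :
    (∃ v ∈ P \ (A ∪ {x}), MintReach H (A ∪ {x}) v u) ∨ ∃ v ∈ P \ B, MintReach H B v u := by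
  obtain ⟨v, hv, hr⟩ := h
  rw [mem_sdiff] at hv
  by_cases hvx : v = x
  · subst hvx
    have hr' := hr.union (T := B \ A) hinc (fun y hy => hBP (mem_sdiff.mp hy).1)
      (fun hv' => hxB (mem_sdiff.mp hv').1)
    rw [union_sdiff_of_subset hAB] at hr'
    exact .inr ⟨v, mem_sdiff.mpr ⟨hxP, hxB⟩, hr'⟩
  · exact .inl ⟨v, by simp [hv.1, hv.2, hvx],
      hr.union hinc (by simpa using hxP) (by simpa using hvx)⟩

theorem mintg_le_mintg_union_singleton_add [DecidableEq α] (hinc : ∀ e ∈ H, e.2 ∉ P)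
    (hAB : A ⊆ B) (hBP : B ⊆ P) (hxP : x ∈ P) (hxB : x ∉ B) :
    mintg P H u A ≤ mintg P H u (A ∪ {x}) + mintg P H u B := by
  have key := exists_mintReach_union_singleton_or (u := u) hinc hAB hBP hxP hxB
  unfold mintg
  split_ifs <;> first | omega | exact absurd (key ‹_›) (not_or.mpr ⟨‹_›, ‹_›⟩)

end

theorem stmt2_general {α : Type*} [DecidableEq α] (E H : Finset (α × α)) (hHE : H ⊆ E)
    (P : Finset α) (hinc : ∀ e ∈ E, e.2 ∉ P) (u : α) :
    ∀ A B : Finset α, ∀ x : α, A ⊆ B → B ⊆ P → x ∈ P → x ∉ B →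
      mintg P H u (B ∪ {x}) - mintg P H u B ≤ mintg P H u (A ∪ {x}) - mintg P H u A := by
  intro A B x hAB hBP hxP hxB
  have hcut : mintg P H u A ≤ mintg P H u (A ∪ {x}) + mintg P H u B :=
    mintg_le_mintg_union_singleton_add (fun e he => hinc e (hHE he)) hAB hBP hxP hxB
  have hAx : mintg P H u (A ∪ {x}) ≤ mintg P H u A := mintg_anti subset_union_left
  have hBx : mintg P H u (B ∪ {x}) ≤ mintg P H u B := mintg_anti subset_union_left
  have hABx : mintg P H u (B ∪ {x}) ≤ mintg P H u (A ∪ {x}) :=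
    mintg_anti (union_subset_union_left hAB)
  have hA : mintg P H u A ≤ 1 := mintg_le_one
  omega

/-- For every fixed realization `H ⊆ E` and node `u ∈ N`, the indicator `g_{H,u}` is
submodular on subsets of `P`. -/
theorem stmt2 {α : Type*} [DecidableEq α] (E H : Finset (α × α)) (hHE : H ⊆ E)
    (w : α × α → ℝ) (hw : ∀ e ∈ E, 0 ≤ w e ∧ w e ≤ 1)
    (P : Finset α) (hinc : ∀ e ∈ E, e.2 ∉ P) (u : α) (hu : u ∉ P) :
    ∀ A B : Finset α, ∀ x : α, A ⊆ B → B ⊆ P → x ∈ P → x ∉ B →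
      mintg P H u (B ∪ {x}) - mintg P H u B ≤ mintg P H u (A ∪ {x}) - mintg P H u A :=
  stmt2_general E H hHE P hinc u
end

section
/- Under the no-incoming-edge condition, reachability from an untreated positive node is unaffected by removing treated positives: for any realization H ⊆ E, any S ⊆ P, any x ∈ P \ S, and any u ∈ N, the node u is reachable from x in H[V \ S] if and only if u is reachable from x in H (i.e., in H with no vertices removed). -/
open Finset

/-! No edge of `H ⊆ E` enters `P`, hence none enters `S ⊆ P`; so a walk in `H` starting at
`x ∉ S` never visits `S`, and removing `S` destroys none of the walks from `x`. -/

open Relation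

section

variable {α : Type*} {H : Finset (α × α)} {S T : Finset α}

theorem MintStep.mono (hTS : T ⊆ S) {a b : α} (h : MintStep H S a b) : MintStep H T a b :=
  ⟨h.1, fun ha => h.2.1 (hTS ha), fun hb => h.2.2 (hTS hb)⟩

namespace MintReach

variable {v u : α}

theorem mono (hTS : T ⊆ S) (h : MintReach H S v u) : MintReach H T v u :=
  ⟨fun hv => h.1 (hTS hv), ReflTransGen.mono (fun _ _ => MintStep.mono hTS) _ _ h.2⟩

theorem of_forall_snd_notMem (hH : ∀ e ∈ H, e.2 ∉ S) (hv : v ∉ S) (h : MintReach H ∅ v u) :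
    MintReach H S v u := by
  obtain ⟨-, h⟩ := h
  refine ⟨hv, ?_⟩
  induction h using ReflTransGen.head_induction_on with
  | refl => exact ReflTransGen.refl
  | @head a b hstep _ ih =>
    have hb : b ∉ S := hH (a, b) hstep.1
    exact ReflTransGen.head ⟨hstep.1, hv, hb⟩ (ih hb)

theorem iff_of_forall_snd_notMem (hH : ∀ e ∈ H, e.2 ∉ S) (hv : v ∉ S) :
    MintReach H S v u ↔ MintReach H ∅ v u :=
  ⟨mono (empty_subset S), of_forall_snd_notMem hH hv⟩

end MintReach

end

theorem stmt3_general {α : Type*} (E H : Finset (α × α)) (hHE : H ⊆ E)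
    (P : Finset α) (hinc : ∀ e ∈ E, e.2 ∉ P)
    (S : Finset α) (hS : S ⊆ P) (x : α) (hxS : x ∉ S)
    (u : α) :
    MintReach H S x u ↔ MintReach H ∅ x u :=
  MintReach.iff_of_forall_snd_notMem (fun e he heS => hinc e (hHE he) (hS heS)) hxS

/-- Under the no-incoming-edge condition, reachability from an untreated positive node is
unaffected by removing treated positives: for `H ⊆ E`, `S ⊆ P`, `x ∈ P \ S`, and `u ∈ N`,
`u` is reachable from `x` in `H[V \ S]` iff `u` is reachable from `x` in `H`
(with no vertices removed). -/
theorem stmt3 {α : Type*} [DecidableEq α] (E H : Finset (α × α)) (hHE : H ⊆ E)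
    (w : α × α → ℝ) (hw : ∀ e ∈ E, 0 ≤ w e ∧ w e ≤ 1)
    (P : Finset α) (hinc : ∀ e ∈ E, e.2 ∉ P)
    (S : Finset α) (hS : S ⊆ P) (x : α) (hxP : x ∈ P) (hxS : x ∉ S)
    (u : α) (hu : u ∉ P) :
    MintReach H S x u ↔ MintReach H ∅ x u :=
  stmt3_general E H hHE P hinc S hS x hxS u
end

section
/- For every fixed realization H ⊆ E, the function f_H is non-negative, monotonically non-increasing, and submodular on subsets of P: f_H(S) ≥ 0 for all S ⊆ P; A ⊆ B ⊆ P implies f_H(A) ≥ f_H(B); and for all A ⊆ B ⊆ P and x ∈ P \ B, f_H(A ∪ {x}) − f_H(A) ≥ f_H(B ∪ {x}) − f_H(B). -/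
open Finset

/-- Key transfer lemma: a path avoiding `S` can be transferred to avoid `T`, provided every
vertex of `T` is in `S` or in `P` (no-incoming set), and the start avoids `T`. Moreover the
endpoint is the start or outside `P`. -/
lemma mint_key {α : Type*} (P : Finset α) (E H : Finset (α × α)) (hHE : H ⊆ E)
    (hinc : ∀ e ∈ E, e.2 ∉ P) (S T : Finset α) (hT : ∀ y ∈ T, y ∈ S ∨ y ∈ P)
    {v u : α} (hv : v ∉ T) (h : Relation.ReflTransGen (MintStep H S) v u) :
    Relation.ReflTransGen (MintStep H T) v u ∧ (u = v ∨ u ∉ P) := by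
  induction h with
  | refl => exact ⟨Relation.ReflTransGen.refl, Or.inl rfl⟩
  | @tail b c hpath hstep ih =>
    obtain ⟨hT', hc⟩ := ih
    obtain ⟨hH, hbS, hcS⟩ := hstep
    have hcP : c ∉ P := hinc _ (hHE hH)
    have hbT : b ∉ T := by
      rcases hc with rfl | hbP
      · exact hv
      · intro hmem
        rcases hT _ hmem with h1 | h1
        · exact hbS h1
        · exact hbP h1
    have hcT : c ∉ T := by
      intro hmem
      rcases hT _ hmem with h1 | h1
      · exact hcS h1
      · exact hcP h1
    exact ⟨hT'.tail ⟨hH, hbT, hcT⟩, Or.inr hcP⟩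

/-- For every fixed realization `H ⊆ E`, the realized objective `f_H` is non-negative,
monotonically non-increasing, and submodular on subsets of `P`. -/
theorem stmt4 {α : Type*} [Fintype α] [DecidableEq α] (E H : Finset (α × α)) (hHE : H ⊆ E)
    (w : α × α → ℝ) (hw : ∀ e ∈ E, 0 ≤ w e ∧ w e ≤ 1)
    (P : Finset α) (hinc : ∀ e ∈ E, e.2 ∉ P) :
    (∀ S ⊆ P, 0 ≤ mintf P H S) ∧
    (∀ A B : Finset α, A ⊆ B → B ⊆ P → mintf P H B ≤ mintf P H A) ∧
    (∀ A B : Finset α, ∀ x : α, A ⊆ B → B ⊆ P → x ∈ P → x ∉ B →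
      (mintf P H (B ∪ {x}) : ℤ) - (mintf P H B : ℤ) ≤
        (mintf P H (A ∪ {x}) : ℤ) - (mintf P H A : ℤ)) := by
  set Rs : Finset α → Set α :=
    fun S => {u : α | u ∉ P ∧ ∃ v ∈ P \ S, MintReach H S v u} with hRs
  have hmintf : ∀ S : Finset α, mintf P H S = (Rs S).ncard := fun S => rfl
  -- antitonicity of Rs
  have mono : ∀ A B : Finset α, A ⊆ B → Rs B ⊆ Rs A := by
    intro A B hAB u hu
    obtain ⟨huP, v, hvmem, hvB, hpath⟩ := hu
    rw [Finset.mem_sdiff] at hvmem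
    have hvA : v ∉ A := fun h => hvmem.2 (hAB h)
    have := mint_key P E H hHE hinc B A (fun y hy => Or.inl (hAB hy)) hvA hpath
    exact ⟨huP, v, Finset.mem_sdiff.mpr ⟨hvmem.1, hvA⟩, hvA, this.1⟩
  -- the key diff inclusion
  have incl2 : ∀ A B : Finset α, ∀ x : α, A ⊆ B → B ⊆ P → x ∈ P → x ∉ B →
      Rs A \ Rs (A ∪ {x}) ⊆ Rs B \ Rs (B ∪ {x}) := by
    intro A B x hAB hBP hxP hxB u hu
    obtain ⟨⟨huP, v, hvmem, hvA, hpath⟩, hu2⟩ := hu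
    rw [Finset.mem_sdiff] at hvmem
    by_cases hvx : v = x
    · -- path from x avoiding A transfers to avoid B
      have hvB : v ∉ B := hvx ▸ hxB
      have hT : ∀ y ∈ B, y ∈ A ∨ y ∈ P := fun y hy => Or.inr (hBP hy)
      have hkey := mint_key P E H hHE hinc A B hT hvB hpath
      refine ⟨⟨huP, v, Finset.mem_sdiff.mpr ⟨hvmem.1, hvB⟩, hvB, hkey.1⟩, ?_⟩
      intro hu3
      exact hu2 (mono (A ∪ {x}) (B ∪ {x}) (Finset.union_subset_union_left hAB) hu3)
    · -- path avoiding A transfers to avoid A ∪ {x}; contradicts hu2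
      exfalso
      have hvAx : v ∉ A ∪ {x} := by
        simp only [Finset.mem_union, Finset.mem_singleton]
        rintro (h | h)
        · exact hvA h
        · exact hvx h
      have hT : ∀ y ∈ A ∪ {x}, y ∈ A ∨ y ∈ P := by
        intro y hy
        rcases Finset.mem_union.mp hy with h | h
        · exact Or.inl h
        · exact Or.inr (Finset.mem_singleton.mp h ▸ hxP)
      have hkey := mint_key P E H hHE hinc A (A ∪ {x}) hT hvAx hpath
      refine hu2 ⟨huP, v, ?_, hvAx, hkey.1⟩
      rw [Finset.mem_sdiff]
      exact ⟨hvmem.1, hvAx⟩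
  refine ⟨fun S _ => Nat.zero_le _, ?_, ?_⟩
  · intro A B hAB hBP
    rw [hmintf, hmintf]
    exact Set.ncard_le_ncard (mono A B hAB) (Set.toFinite _)
  · intro A B x hAB hBP hxP hxB
    have hxA : x ∉ A := fun h => hxB (hAB h)
    have h1 : Rs (A ∪ {x}) ⊆ Rs A := mono A (A ∪ {x}) Finset.subset_union_left
    have h2 : Rs (B ∪ {x}) ⊆ Rs B := mono B (B ∪ {x}) Finset.subset_union_left
    have hdA : (Rs A \ Rs (A ∪ {x})).ncard = (Rs A).ncard - (Rs (A ∪ {x})).ncard :=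
      Set.ncard_diff h1 (Set.toFinite _)
    have hdB : (Rs B \ Rs (B ∪ {x})).ncard = (Rs B).ncard - (Rs (B ∪ {x})).ncard :=
      Set.ncard_diff h2 (Set.toFinite _)
    have hle : (Rs A \ Rs (A ∪ {x})).ncard ≤ (Rs B \ Rs (B ∪ {x})).ncard :=
      Set.ncard_le_ncard (incl2 A B x hAB hBP hxP hxB) (Set.toFinite _)
    have ha : (Rs (A ∪ {x})).ncard ≤ (Rs A).ncard :=
      Set.ncard_le_ncard h1 (Set.toFinite _)
    have hb : (Rs (B ∪ {x})).ncard ≤ (Rs B).ncard :=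
      Set.ncard_le_ncard h2 (Set.toFinite _)
    rw [hmintf, hmintf, hmintf, hmintf]
    omega
end

section
/- Every Minimum-k-Union instance is realized by a MINT instance: let X_1, …, X_m be finite subsets of a finite universe U, and construct the directed bipartite graph with vertex set V = {p_1, …, p_m} ⊔ U, positive nodes P = {p_1, …, p_m}, negative nodes N = U, and edge set H = {(p_i, u) : u ∈ X_i}. Then for every index set I ⊆ {1, …, m}, f_H({p_i : i ∈ I}) = |⋃_{i ∉ I} X_i|; in particular, for every k with 0 ≤ k ≤ m, the minimum of f_H(S) over S ⊆ P with |S| ≤ k equals the minimum of |⋃_{i ∈ J} X_i| over J ⊆ {1, …, m} with |J| = m − k. -/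
open Finset

/-!
When every edge runs from a positive to a negative node, paths have length at most one, so
`f_H(S)` counts the negative nodes with an edge from `P \ S`; in the graph of a set system these
are the elements of the sets `X_i` with `p_i ∉ S`. Since the union is monotone in the index set,
keeping at least `m - k` sets is never better than keeping exactly `m - k` of them.
-/

section Bipartite

variable {α : Type*} {P S : Finset α} {H : Finset (α × α)}

theorem reflTransGen_mintStep_iff_of_bipartite (hH : ∀ e ∈ H, e.1 ∈ P ∧ e.2 ∉ P) {v u : α} :
    Relation.ReflTransGen (MintStep H S) v u ↔ u = v ∨ MintStep H S v u := by
  constructor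
  · intro h
    rcases h.cases_head with rfl | ⟨w, hvw, hwu⟩
    · exact Or.inl rfl
    · rcases hwu.cases_head with rfl | ⟨x, hwx, -⟩
      · exact Or.inr hvw
      · exact absurd (hH _ hwx.1).1 (hH _ hvw.1).2
  · rintro (rfl | h)
    · exact .refl
    · exact .single h

theorem mintf_eq_ncard_of_bipartite [DecidableEq α] (hH : ∀ e ∈ H, e.1 ∈ P ∧ e.2 ∉ P) :
    mintf P H S = {u | ∃ v ∈ P \ S, MintStep H S v u}.ncard := by
  unfold mintf
  congr 1
  ext u
  simp only [MintReach, Set.mem_ofPred_eq, reflTransGen_mintStep_iff_of_bipartite hH]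
  constructor
  · rintro ⟨huP, v, hv, -, rfl | h⟩
    · exact absurd (mem_sdiff.1 hv).1 huP
    · exact ⟨v, hv, h⟩
  · rintro ⟨v, hv, h⟩
    exact ⟨(hH _ h.1).2, v, hv, h.2.1, Or.inr h⟩

end Bipartite

section SetSystem

variable {ι U : Type*} [Fintype ι] [DecidableEq ι] [DecidableEq U] (X : ι → Finset U)

def setSystemGraph : Finset ((ι ⊕ U) × (ι ⊕ U)) :=
  univ.biUnion fun i => (X i).image fun u => (Sum.inl i, Sum.inr u)

theorem mem_setSystemGraph {e : (ι ⊕ U) × (ι ⊕ U)} :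
    e ∈ setSystemGraph X ↔ ∃ i, ∃ u ∈ X i, e = (Sum.inl i, Sum.inr u) := by
  simp [setSystemGraph, eq_comm]

theorem setSystemGraph_bipartite :
    ∀ e ∈ setSystemGraph X, e.1 ∈ univ.image Sum.inl ∧ e.2 ∉ univ.image Sum.inl := by
  intro e he
  obtain ⟨i, u, -, rfl⟩ := (mem_setSystemGraph X).1 he
  simp

theorem mintf_setSystemGraph (I : Finset ι) :
    mintf (univ.image Sum.inl) (setSystemGraph X) (I.image Sum.inl) = #(Iᶜ.biUnion X) := by
  rw [mintf_eq_ncard_of_bipartite (setSystemGraph_bipartite X)]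
  have hreached : {w | ∃ v ∈ univ.image Sum.inl \ I.image Sum.inl,
      MintStep (setSystemGraph X) (I.image Sum.inl) v w} = Sum.inr '' ↑(Iᶜ.biUnion X) := by
    ext w
    constructor
    · rintro ⟨v, hv, ⟨hvw, -, -⟩⟩
      obtain ⟨i, u, hu, hvw⟩ := (mem_setSystemGraph X).1 hvw
      obtain ⟨rfl, rfl⟩ := Prod.mk.inj hvw
      have hi : i ∉ I := fun hi => (mem_sdiff.1 hv).2 (mem_image_of_mem _ hi)
      exact ⟨u, by simpa using ⟨i, hi, hu⟩, rfl⟩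
    · rintro ⟨u, hu, rfl⟩
      obtain ⟨i, hi, hu⟩ : ∃ i ∉ I, u ∈ X i := by simpa using hu
      have hiI : (Sum.inl i : ι ⊕ U) ∉ I.image Sum.inl := by simpa using hi
      exact ⟨Sum.inl i, mem_sdiff.2 ⟨mem_image_of_mem _ (mem_univ i), hiI⟩,
        (mem_setSystemGraph X).2 ⟨i, u, hu, rfl⟩, hiI, by simp⟩
  rw [hreached, Set.ncard_image_of_injective _ Sum.inr_injective, Set.ncard_coe_finset]

theorem sInf_mintf_setSystemGraph {k : ℕ} (hk : k ≤ Fintype.card ι) :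
    sInf {n | ∃ S ⊆ univ.image Sum.inl, #S ≤ k ∧
        mintf (univ.image Sum.inl) (setSystemGraph X) S = n} =
      sInf {n | ∃ J : Finset ι, #J = Fintype.card ι - k ∧ #(J.biUnion X) = n} := by
  apply csInf_eq_csInf_of_forall_exists_le
  · rintro _ ⟨S, hS, hSk, rfl⟩
    obtain ⟨I, -, rfl⟩ := subset_image_iff.1 hS
    rw [card_image_of_injective _ Sum.inl_injective] at hSk
    obtain ⟨J, hJI, hJ⟩ := exists_subset_card_eq
      (show Fintype.card ι - k ≤ #Iᶜ by rw [card_compl]; omega)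
    rw [mintf_setSystemGraph]
    exact ⟨_, ⟨J, hJ, rfl⟩, card_le_card (biUnion_subset_biUnion_of_subset_left X hJI)⟩
  · rintro _ ⟨J, hJ, rfl⟩
    refine ⟨_, ⟨Jᶜ.image Sum.inl, image_subset_image (subset_univ _), ?_, rfl⟩, ?_⟩
    · rw [card_image_of_injective _ Sum.inl_injective, card_compl]
      omega
    · rw [mintf_setSystemGraph, compl_compl]

end SetSystem

theorem stmt6_general {U : Type*} [DecidableEq U] (m : ℕ) (X : Fin m → Finset U)
    (k : ℕ) (hk : k ≤ m) :
    letI P : Finset (Fin m ⊕ U) := Finset.univ.image Sum.inl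
    letI H : Finset ((Fin m ⊕ U) × (Fin m ⊕ U)) :=
      Finset.univ.biUnion fun i : Fin m => (X i).image fun u => (Sum.inl i, Sum.inr u)
    (∀ I : Finset (Fin m), mintf P H (I.image Sum.inl) = (Iᶜ.biUnion X).card) ∧
    sInf {n : ℕ | ∃ S ⊆ P, S.card ≤ k ∧ mintf P H S = n} =
      sInf {n : ℕ | ∃ J : Finset (Fin m), J.card = m - k ∧ (J.biUnion X).card = n} := by
  refine ⟨mintf_setSystemGraph X, ?_⟩
  have h := sInf_mintf_setSystemGraph X (k := k) (by rwa [Fintype.card_fin])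
  rw [Fintype.card_fin] at h
  exact h

/-- Every Minimum-k-Union instance `X_1, …, X_m ⊆ U` is realized by the MINT instance on the
directed bipartite graph with vertices `Fin m ⊕ U`, positive nodes `P = {p_i}`, negative
nodes `U`, and edges `(p_i, u)` for `u ∈ X_i`: for every `I ⊆ {1, …, m}`,
`f_H({p_i : i ∈ I}) = |⋃_{i ∉ I} X_i|`, and for every `0 ≤ k ≤ m` the minimum of `f_H(S)`
over `S ⊆ P`, `|S| ≤ k` equals the minimum of `|⋃_{i ∈ J} X_i|` over `|J| = m - k`. -/
theorem stmt6 {U : Type*} [Fintype U] [DecidableEq U] (m : ℕ) (X : Fin m → Finset U)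
    (k : ℕ) (hk : k ≤ m) :
    letI P : Finset (Fin m ⊕ U) := Finset.univ.image Sum.inl
    letI H : Finset ((Fin m ⊕ U) × (Fin m ⊕ U)) :=
      Finset.univ.biUnion fun i : Fin m => (X i).image fun u => (Sum.inl i, Sum.inr u)
    (∀ I : Finset (Fin m), mintf P H (I.image Sum.inl) = (Iᶜ.biUnion X).card) ∧
    sInf {n : ℕ | ∃ S ⊆ P, S.card ≤ k ∧ mintf P H S = n} =
      sInf {n : ℕ | ∃ J : Finset (Fin m), J.card = m - k ∧ (J.biUnion X).card = n} :=
  stmt6_general m X k hk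
end

section
/- Reduction of MINT to influence minimization: let Q be a finite set disjoint from V with a bijection φ : P → Q, and define the augmented graph on vertex set V ∪ Q with edge set E' = E ∪ {(φ(p), p) : p ∈ P}. Then for every realization H ⊆ E and every S ⊆ P, letting H' = H ∪ {(φ(p), p) : p ∈ P}, the number of nodes u ∈ V ∪ Q that are reachable (via a directed path of length ≥ 0 using only edges of H' and only vertices in (V ∪ Q) \ S) from some node of Q equals f_H(S) + 2|P| − |S|. In particular, for any fixed k, minimizing the augmented-graph objective over S ⊆ P with |S| = k is equivalent to minimizing f_H(S) (and, taking the Pr-weighted sum over H ⊆ E, to minimizing F(S)) over the same family. -/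
/-!
In the augmented graph every `q ∈ Q` is active, and its only edge leads to `φ⁻¹ q ∈ P`, which
is live exactly when it is untreated; from there the process runs inside `H[V \ S]`. So the
reachable set is `Q`, plus `P \ S` (positive nodes have no incoming edges in `H`, so no other
positive node is reached), plus the `f_H(S)` negative nodes reached from `P \ S`: in total
`|P| + (|P| - |S|) + f_H(S)`. The constant `2|P| - |S|` depends on `S` only through `|S|`,
so it cancels when comparing two sets of the same size, also after averaging over `H`.
-/

open Finset

/-- The augmented edge set `H' = H ∪ {(φ(p), p) : p ∈ P}` on vertex set `V ⊕ Q`. -/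
def mintAugEdges {α γ : Type*} [DecidableEq α] [DecidableEq γ] (P : Finset α)
    (φ : {x // x ∈ P} ≃ γ) (H : Finset (α × α)) : Finset ((α ⊕ γ) × (α ⊕ γ)) :=
  H.image (fun e => (Sum.inl e.1, Sum.inl e.2)) ∪
    P.attach.image fun p => (Sum.inr (φ p), Sum.inl p.val)

/-- The influence-minimization objective on the augmented graph: the number of vertices of
`V ⊕ Q` reachable from some initially active node of `Q` after removing `S`. -/
noncomputable def mintAug {α γ : Type*} [DecidableEq α] [DecidableEq γ] (P : Finset α)
    (φ : {x // x ∈ P} ≃ γ) (H : Finset (α × α)) (S : Finset α) : ℕ :=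
  Set.ncard {u : α ⊕ γ | ∃ q : γ, MintReach (mintAugEdges P φ H) (S.image Sum.inl) (Sum.inr q) u}

open Relation

section Reach

variable {α : Type*} {H : Finset (α × α)} {S : Finset α}

lemma eq_or_exists_mem_of_reflTransGen_mintStep {v u : α}
    (h : ReflTransGen (MintStep H S) v u) : u = v ∨ ∃ x, (x, u) ∈ H := by
  rcases h.cases_tail with rfl | ⟨x, -, hx, -⟩
  · exact Or.inl rfl
  · exact Or.inr ⟨x, hx⟩

variable [DecidableEq α] {P : Finset α}

lemma setOf_mintReach_eq_union (hinc : ∀ e ∈ H, e.2 ∉ P) :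
    {u | ∃ p ∈ P \ S, MintReach H S p u} =
      ↑(P \ S) ∪ {u | u ∉ P ∧ ∃ v ∈ P \ S, MintReach H S v u} := by
  ext u
  constructor
  · rintro ⟨p, hp, hr⟩
    by_cases hu : u ∈ P
    · rcases eq_or_exists_mem_of_reflTransGen_mintStep hr.2 with rfl | ⟨x, hx⟩
      · exact Or.inl hp
      · exact absurd hu (hinc _ hx)
    · exact Or.inr ⟨hu, p, hp, hr⟩
  · rintro (hu | ⟨-, hr⟩)
    · exact ⟨u, hu, (mem_sdiff.mp hu).2, .refl⟩
    · exact hr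

lemma finite_setOf_mintReach : {u | ∃ p ∈ P \ S, MintReach H S p u}.Finite := by
  refine (P \ S ∪ H.image Prod.snd).finite_toSet.subset ?_
  rintro u ⟨p, hp, -, hr⟩
  rcases eq_or_exists_mem_of_reflTransGen_mintStep hr with rfl | ⟨x, hx⟩
  · exact mem_union_left _ hp
  · exact mem_union_right _ (mem_image.mpr ⟨(x, u), hx, rfl⟩)

lemma ncard_setOf_mintReach (hinc : ∀ e ∈ H, e.2 ∉ P) :
    {u | ∃ p ∈ P \ S, MintReach H S p u}.ncard = (P \ S).card + mintf P H S := by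
  rw [setOf_mintReach_eq_union hinc, Set.ncard_union_eq _ (P \ S).finite_toSet
    (finite_setOf_mintReach.subset fun _ hu => hu.2), Set.ncard_coe_finset, mintf]
  exact Set.disjoint_left.mpr fun u hu h => h.1 (mem_sdiff.mp hu).1

end Reach

section Augmented

variable {α γ : Type*} [DecidableEq α] [DecidableEq γ] {P : Finset α} {φ : {x // x ∈ P} ≃ γ}
  {H : Finset (α × α)} {S : Finset α}

lemma inl_mem_mintAugEdges {x : α} {z : α ⊕ γ} :
    (Sum.inl x, z) ∈ mintAugEdges P φ H ↔ ∃ y, z = Sum.inl y ∧ (x, y) ∈ H := by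
  simp only [mintAugEdges, mem_union, mem_image, mem_attach, true_and, Prod.ext_iff,
    Sum.inl.injEq, reduceCtorEq, false_and, exists_false, or_false]
  constructor
  · rintro ⟨e, he, rfl, rfl⟩
    exact ⟨e.2, rfl, he⟩
  · rintro ⟨y, rfl, hy⟩
    exact ⟨(x, y), hy, rfl, rfl⟩

lemma inr_mem_mintAugEdges {q : γ} {z : α ⊕ γ} :
    (Sum.inr q, z) ∈ mintAugEdges P φ H ↔ z = Sum.inl (φ.symm q : α) := by
  simp only [mintAugEdges, mem_union, mem_image, mem_attach, true_and, Prod.ext_iff,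
    reduceCtorEq, false_and, and_false, exists_false, false_or, Sum.inr.injEq]
  constructor
  · rintro ⟨p, rfl, rfl⟩
    simp
  · rintro rfl
    exact ⟨φ.symm q, by simp⟩

lemma mintStep_mintAugEdges_inl {x : α} {z : α ⊕ γ} :
    MintStep (mintAugEdges P φ H) (S.image Sum.inl) (Sum.inl x) z ↔
      ∃ y, z = Sum.inl y ∧ MintStep H S x y := by
  simp only [MintStep, inl_mem_mintAugEdges]
  constructor
  · rintro ⟨⟨y, rfl, hy⟩, hx, hz⟩
    exact ⟨y, rfl, hy, by simpa using hx, by simpa using hz⟩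
  · rintro ⟨y, rfl, hy, hx, hz⟩
    exact ⟨⟨y, rfl, hy⟩, by simpa using hx, by simpa using hz⟩

lemma mintStep_mintAugEdges_inr {q : γ} {z : α ⊕ γ} :
    MintStep (mintAugEdges P φ H) (S.image Sum.inl) (Sum.inr q) z ↔
      z = Sum.inl (φ.symm q : α) ∧ (φ.symm q : α) ∉ S := by
  simp only [MintStep, inr_mem_mintAugEdges]
  constructor
  · rintro ⟨rfl, -, hz⟩
    exact ⟨rfl, by simpa using hz⟩
  · rintro ⟨rfl, hq⟩
    exact ⟨rfl, by simp, by simpa using hq⟩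

lemma reflTransGen_mintStep_mintAugEdges_inl {x : α} {z : α ⊕ γ} :
    ReflTransGen (MintStep (mintAugEdges P φ H) (S.image Sum.inl)) (Sum.inl x) z ↔
      ∃ y, z = Sum.inl y ∧ ReflTransGen (MintStep H S) x y := by
  constructor
  · intro h
    induction h with
    | refl => exact ⟨x, rfl, .refl⟩
    | tail _ hstep ih =>
      obtain ⟨y, rfl, hr⟩ := ih
      obtain ⟨y', rfl, hs⟩ := mintStep_mintAugEdges_inl.mp hstep
      exact ⟨y', rfl, hr.tail hs⟩
  · rintro ⟨y, rfl, h⟩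
    exact h.lift _ fun a b hab => mintStep_mintAugEdges_inl.mpr ⟨b, rfl, hab⟩

lemma setOf_mintAug_eq :
    {u | ∃ q, MintReach (mintAugEdges P φ H) (S.image Sum.inl) (Sum.inr q) u} =
      Set.range Sum.inr ∪ Sum.inl '' {u | ∃ p ∈ P \ S, MintReach H S p u} := by
  ext u
  constructor
  · rintro ⟨q, -, hr⟩
    rcases hr.cases_head with rfl | ⟨z, hstep, hr⟩
    · exact Or.inl ⟨q, rfl⟩
    · obtain ⟨rfl, hq⟩ := mintStep_mintAugEdges_inr.mp hstep
      obtain ⟨y, rfl, hy⟩ := reflTransGen_mintStep_mintAugEdges_inl.mp hr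
      exact Or.inr ⟨y, ⟨φ.symm q, mem_sdiff.mpr ⟨(φ.symm q).2, hq⟩, hq, hy⟩, rfl⟩
  · rintro (⟨q, rfl⟩ | ⟨y, ⟨p, hp, hpS, hy⟩, rfl⟩)
    · exact ⟨q, by simp, .refl⟩
    · refine ⟨φ ⟨p, (mem_sdiff.mp hp).1⟩, by simp, ?_⟩
      refine .head (mintStep_mintAugEdges_inr.mpr ?_)
        (reflTransGen_mintStep_mintAugEdges_inl.mpr ⟨y, rfl, hy⟩)
      simpa using hpS

theorem mintAug_eq (hinc : ∀ e ∈ H, e.2 ∉ P) :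
    mintAug P φ H S = P.card + (P \ S).card + mintf P H S := by
  have : Finite γ := .of_equiv _ φ
  have hQ : (Set.range (Sum.inr : γ → α ⊕ γ)).ncard = P.card := by
    rw [← Set.image_univ, Set.ncard_image_of_injective _ Sum.inr_injective, Set.ncard_univ,
      ← Nat.card_congr φ, Nat.card_eq_finsetCard]
  rw [mintAug, setOf_mintAug_eq, Set.ncard_union_eq _ (Set.toFinite _)
    (finite_setOf_mintReach.image _), hQ, Set.ncard_image_of_injective _ Sum.inl_injective,
    ncard_setOf_mintReach hinc, add_assoc]
  exact Set.disjoint_left.mpr fun u ⟨q, hq⟩ ⟨y, _, hy⟩ => by simp [← hq] at hy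

lemma sum_mintPr_mul_mintAug {E : Finset (α × α)} (w : α × α → ℝ) (hinc : ∀ e ∈ E, e.2 ∉ P) :
    ∑ H ∈ E.powerset, mintPr E w H * (mintAug P φ H S : ℝ) =
      mintF E w P S + (P.card + (P \ S).card : ℝ) * ∑ H ∈ E.powerset, mintPr E w H := by
  rw [mintF, mul_sum, ← sum_add_distrib]
  refine sum_congr rfl fun H hH => ?_
  rw [mintAug_eq fun e he => hinc e (mem_powerset.mp hH he)]
  push_cast
  ring

end Augmented

theorem stmt13_general {α γ : Type*} [DecidableEq α] [DecidableEq γ]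
    (E : Finset (α × α)) (w : α × α → ℝ)
    (P : Finset α) (hinc : ∀ e ∈ E, e.2 ∉ P)
    (φ : {x // x ∈ P} ≃ γ) :
    (∀ H ⊆ E, ∀ S ⊆ P, mintAug P φ H S = mintf P H S + 2 * P.card - S.card) ∧
    (∀ k : ℕ, ∀ S₁ ⊆ P, ∀ S₂ ⊆ P, S₁.card = k → S₂.card = k →
      (∀ H ⊆ E, (mintAug P φ H S₁ ≤ mintAug P φ H S₂ ↔ mintf P H S₁ ≤ mintf P H S₂)) ∧
      ((∑ H ∈ E.powerset, mintPr E w H * (mintAug P φ H S₁ : ℝ)) ≤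
          (∑ H ∈ E.powerset, mintPr E w H * (mintAug P φ H S₂ : ℝ)) ↔
        mintF E w P S₁ ≤ mintF E w P S₂)) := by
  have hincH : ∀ H ⊆ E, ∀ e ∈ H, e.2 ∉ P := fun H hH e he => hinc e (hH he)
  refine ⟨fun H hH S hS => ?_, fun k S₁ hS₁ S₂ hS₂ hk₁ hk₂ => ?_⟩
  · rw [mintAug_eq (hincH H hH), card_sdiff_of_subset hS]
    have := card_le_card hS
    omega
  have hsdiff : (P \ S₁).card = (P \ S₂).card := by
    rw [card_sdiff_of_subset hS₁, card_sdiff_of_subset hS₂, hk₁, hk₂]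
  refine ⟨fun H hH => ?_, ?_⟩
  · rw [mintAug_eq (hincH H hH), mintAug_eq (hincH H hH), hsdiff]
    omega
  · rw [sum_mintPr_mul_mintAug w hinc, sum_mintPr_mul_mintAug w hinc, hsdiff]
    exact add_le_add_iff_right _

/-- Reduction of MINT to influence minimization on the augmented graph: for every
realization `H ⊆ E` and every `S ⊆ P`, the augmented objective equals
`f_H(S) + 2|P| - |S|`; in particular, for any fixed budget `k`, minimizing the
augmented-graph objective over `S ⊆ P` with `|S| = k` is equivalent to minimizing
`f_H(S)`, and (taking `Pr`-weighted sums over `H ⊆ E`) to minimizing `F(S)`. -/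
theorem stmt13 {α γ : Type*} [Fintype α] [DecidableEq α] [Fintype γ] [DecidableEq γ]
    (E : Finset (α × α)) (w : α × α → ℝ) (hw : ∀ e ∈ E, 0 ≤ w e ∧ w e ≤ 1)
    (P : Finset α) (hinc : ∀ e ∈ E, e.2 ∉ P)
    (φ : {x // x ∈ P} ≃ γ) :
    (∀ H ⊆ E, ∀ S ⊆ P, mintAug P φ H S = mintf P H S + 2 * P.card - S.card) ∧
    (∀ k : ℕ, ∀ S₁ ⊆ P, ∀ S₂ ⊆ P, S₁.card = k → S₂.card = k →
      (∀ H ⊆ E, (mintAug P φ H S₁ ≤ mintAug P φ H S₂ ↔ mintf P H S₁ ≤ mintf P H S₂)) ∧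
      ((∑ H ∈ E.powerset, mintPr E w H * (mintAug P φ H S₁ : ℝ)) ≤
          (∑ H ∈ E.powerset, mintPr E w H * (mintAug P φ H S₂ : ℝ)) ↔
        mintF E w P S₁ ≤ mintF E w P S₂)) :=
  stmt13_general E w P hinc φ
end
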